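/- Let m ≥ 3. The graph on vertex set Z_m × Z_8 formed by the union of Cay(Z_m × Z_8, {±1} × {6}) and, for each j ∈ Z_m, copies on {j} × Z_8 of the 1-factors I_2 = {(1,2),(3,4),(5,6),(7,0)} and I_7 = {(0,3),(1,6),(2,5),(4,7)}, can be decomposed into two C_8-factors. -/
import Mathlib


open SimpleGraph

/-- `H` is a `C_k`-factor: a 2-regular spanning graph all of whose
connected components have exactly `k` vertices (hence are `k`-cycles). -/
def IsCycleFactor {V : Type*} (H : SimpleGraph V) (k : ℕ) : Prop :=
  (∀ v, (H.neighborSet v).ncard = 2) ∧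
  (∀ v, (H.connectedComponentMk v).supp.ncard = k)

/-- `H` is a perfect matching (1-factor): every vertex has exactly one neighbour. -/
def IsOneFactor {V : Type*} (H : SimpleGraph V) : Prop :=
  ∀ v, (H.neighborSet v).ncard = 1

/-- A partition of the edge set of `G` into cycle factors with prescribed cycle lengths. -/
def CycleDecomp {V : Type*} {k : ℕ} (G : SimpleGraph V) (ℓ : Fin k → ℕ) : Prop :=
  ∃ f : Fin k → SimpleGraph V,
    (∀ i, f i ≤ G ∧ IsCycleFactor (f i) (ℓ i)) ∧
    ∀ e ∈ G.edgeSet, ∃! i, e ∈ (f i).edgeSet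

/-- A partition of the edge set of `G` into cycle factors with prescribed cycle
lengths together with one perfect matching. -/
def CycleDecompPM {V : Type*} {k : ℕ} (G : SimpleGraph V) (ℓ : Fin k → ℕ) : Prop :=
  ∃ (f : Fin k → SimpleGraph V) (M : SimpleGraph V),
    (∀ i, f i ≤ G ∧ IsCycleFactor (f i) (ℓ i)) ∧ M ≤ G ∧ IsOneFactor M ∧
    ∀ e ∈ G.edgeSet,
      ((∃! i, e ∈ (f i).edgeSet) ∧ e ∉ M.edgeSet) ∨
      ((∀ i, e ∉ (f i).edgeSet) ∧ e ∈ M.edgeSet)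

/-- The Cayley graph on `ZMod m × ZMod n` with connection set `S`
(symmetrised, loops removed). -/
def cay (m n : ℕ) (S : Set (ZMod m × ZMod n)) : SimpleGraph (ZMod m × ZMod n) :=
  SimpleGraph.fromRel (fun x y => x - y ∈ S)

/-- The 1-factors `I_2` and `I_7` of `K_8`, as a set of pairs. -/
def I27 : Set (ZMod 8 × ZMod 8) :=
  {(1, 2), (3, 4), (5, 6), (7, 0), (0, 3), (1, 6), (2, 5), (4, 7)}

namespace S8

def pairs27 (b c : ZMod 8) : Prop :=
  (b=1∧c=2)∨(b=3∧c=4)∨(b=5∧c=6)∨(b=7∧c=0)∨(b=0∧c=3)∨(b=1∧c=6)∨(b=2∧c=5)∨(b=4∧c=7)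

instance (b c : ZMod 8) : Decidable (pairs27 b c) := by
  unfold pairs27; infer_instance

lemma I27_iff (b c : ZMod 8) : (b, c) ∈ I27 ↔ pairs27 b c := by
  simp [I27, pairs27, Prod.ext_iff]

def G' (m : ℕ) : SimpleGraph (ZMod m × ZMod 8) :=
  SimpleGraph.fromRel (fun x y : ZMod m × ZMod 8 =>
    x - y = ((1 : ZMod m), (6 : ZMod 8)) ∨ (x.1 = y.1 ∧ (x.2, y.2) ∈ I27))

/-- successor permutation on the second coordinate, for each factor -/
def nnF : Fin 2 → ZMod 8 → ZMod 8 := fun i b =>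
  if i = 0 then
    (if b = 0 then 3 else if b = 1 then 2 else if b = 2 then 4 else if b = 3 then 1
     else if b = 4 then 7 else if b = 5 then 6 else if b = 6 then 0 else 5)
  else
    (if b = 0 then 7 else if b = 1 then 6 else if b = 2 then 0 else if b = 3 then 5
     else if b = 4 then 3 else if b = 5 then 2 else if b = 6 then 4 else 1)

/-- inverse of `nnF i` -/
def mmF : Fin 2 → ZMod 8 → ZMod 8 := fun i b =>
  if i = 0 then
    (if b = 0 then 6 else if b = 1 then 3 else if b = 2 then 1 else if b = 3 then 0
     else if b = 4 then 2 else if b = 5 then 7 else if b = 6 then 5 else 4)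
  else
    (if b = 0 then 2 else if b = 1 then 7 else if b = 2 then 5 else if b = 3 then 4
     else if b = 4 then 6 else if b = 5 then 3 else if b = 6 then 1 else 0)

/-- column displacement when stepping from a vertex with the given second coordinate -/
def DzF : Fin 2 → ZMod 8 → ℤ := fun i b =>
  if i = 0 then (if b = 2 ∨ b = 6 then -1 else if b = 3 ∨ b = 7 then 1 else 0)
  else (if b = 2 ∨ b = 6 then 1 else if b = 3 ∨ b = 7 then -1 else 0)

/-- column offset of the cycle vertex with a given second coordinate -/
def EzF : Fin 2 → ZMod 8 → ℤ := fun i b =>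
  if b = 0 ∨ b = 3 ∨ b = 4 ∨ b = 7 then (if i = 0 then 0 else 1)
  else (if i = 0 then 1 else 0)

variable (m : ℕ)

def P (i : Fin 2) (v : ZMod m × ZMod 8) : ZMod m × ZMod 8 :=
  (v.1 + (DzF i v.2 : ZMod m), nnF i v.2)

def Q (i : Fin 2) (v : ZMod m × ZMod 8) : ZMod m × ZMod 8 :=
  (v.1 - (DzF i (mmF i v.2) : ZMod m), mmF i v.2)

def F (i : Fin 2) : SimpleGraph (ZMod m × ZMod 8) :=
  SimpleGraph.fromRel fun x y => y = P m i x

variable {m}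

lemma hmn : ∀ (i : Fin 2) (c : ZMod 8), mmF i (nnF i c) = c := by decide
lemma hnm : ∀ (i : Fin 2) (c : ZMod 8), nnF i (mmF i c) = c := by decide
lemma hnne : ∀ (i : Fin 2) (c : ZMod 8), nnF i c ≠ c := by decide
lemma hnmne : ∀ (i : Fin 2) (c : ZMod 8), nnF i c ≠ mmF i c := by decide
lemma hED : ∀ (i : Fin 2) (c : ZMod 8), EzF i c + DzF i c = EzF i (nnF i c) := by decide

lemma QP (i : Fin 2) (v : ZMod m × ZMod 8) : Q m i (P m i v) = v := by
  obtain ⟨a, b⟩ := v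
  simp only [P, Q, hmn]
  exact Prod.ext (by ring) rfl

lemma PQ (i : Fin 2) (v : ZMod m × ZMod 8) : P m i (Q m i v) = v := by
  obtain ⟨a, b⟩ := v
  simp only [P, Q, hnm]
  exact Prod.ext (by ring) rfl

lemma P_ne (i : Fin 2) (v : ZMod m × ZMod 8) : P m i v ≠ v := by
  intro h
  exact hnne i v.2 (congrArg Prod.snd h)

lemma Q_ne (i : Fin 2) (v : ZMod m × ZMod 8) : Q m i v ≠ v := by
  intro h
  have := congrArg (P m i) h
  rw [PQ] at this
  exact P_ne i v this.symm

lemma PQ_ne (i : Fin 2) (v : ZMod m × ZMod 8) : P m i v ≠ Q m i v := by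
  intro h
  exact hnmne i v.2 (congrArg Prod.snd h)

lemma adj_iff (i : Fin 2) (x y : ZMod m × ZMod 8) :
    (F m i).Adj x y ↔ y = P m i x ∨ y = Q m i x := by
  constructor
  · rintro ⟨hne, h | h⟩
    · exact Or.inl h
    · right; rw [h, QP]
  · rintro (rfl | rfl)
    · exact ⟨(P_ne i x).symm, Or.inl rfl⟩
    · exact ⟨(Q_ne i x).symm, Or.inr (PQ i x).symm⟩

lemma hsub : ∀ (i : Fin 2) (b : ZMod 8),
    (DzF i b = 1 ∧ nnF i b = b + 6) ∨ (DzF i b = -1 ∧ nnF i b = b + 2) ∨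
    (DzF i b = 0 ∧ (pairs27 b (nnF i b) ∨ pairs27 (nnF i b) b)) := by decide

lemma subG (i : Fin 2) (x : ZMod m × ZMod 8) : (G' m).Adj x (P m i x) := by
  obtain ⟨a, b⟩ := x
  refine ⟨(P_ne i (a, b)).symm, ?_⟩
  rcases hsub i b with ⟨h1, h2⟩ | ⟨h1, h2⟩ | ⟨h1, h2⟩
  · refine Or.inr (Or.inl ?_)
    simp only [P, Prod.mk_sub_mk, h1, h2]
    exact Prod.ext (by push_cast; ring) (by ring)
  · refine Or.inl (Or.inl ?_)
    simp only [P, Prod.mk_sub_mk, h1, h2]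
    refine Prod.ext (by push_cast; ring) ?_
    have : ∀ c : ZMod 8, c - (c + 2) = 6 := by decide
    exact this b
  · rcases h2 with h2 | h2
    · refine Or.inl (Or.inr ⟨?_, ?_⟩)
      · simp [P, h1]
      · simpa [P, I27_iff] using h2
    · refine Or.inr (Or.inr ⟨?_, ?_⟩)
      · simp [P, h1]
      · simpa [P, I27_iff] using h2

lemma le_G (i : Fin 2) : F m i ≤ G' m := by
  intro x y h
  rw [adj_iff] at h
  rcases h with rfl | rfl
  · exact subG i x
  · have := subG i (Q m i x)
    rw [PQ] at this
    exact this.symm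

lemma neighborSet_eq (i : Fin 2) (v : ZMod m × ZMod 8) :
    (F m i).neighborSet v = {P m i v, Q m i v} := by
  ext w
  simp [mem_neighborSet, adj_iff]

lemma deg2 (i : Fin 2) (v : ZMod m × ZMod 8) : ((F m i).neighborSet v).ncard = 2 := by
  rw [neighborSet_eq]
  exact Set.ncard_pair (PQ_ne i v)

def E' (m : ℕ) (i : Fin 2) (c : ZMod 8) : ZMod m := ((EzF i c : ℤ) : ZMod m)

def Sset (m : ℕ) (i : Fin 2) (x : ZMod m × ZMod 8) : Set (ZMod m × ZMod 8) :=
  Set.range (fun c : ZMod 8 => (x.1 - E' m i x.2 + E' m i c, c))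

lemma mem_Sset_self (i : Fin 2) (x : ZMod m × ZMod 8) : x ∈ Sset m i x := by
  refine ⟨x.2, ?_⟩
  exact Prod.ext (by ring) rfl

lemma castED (i : Fin 2) (c : ZMod 8) :
    E' m i c + ((DzF i c : ℤ) : ZMod m) = E' m i (nnF i c) := by
  simp only [E', ← Int.cast_add, hED]

lemma P_mem_Sset {i : Fin 2} {x y : ZMod m × ZMod 8} (hy : y ∈ Sset m i x) :
    P m i y ∈ Sset m i x := by
  obtain ⟨c, rfl⟩ := hy
  refine ⟨nnF i c, Prod.ext ?_ rfl⟩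
  have h := castED (m := m) i c
  simp only [P]
  linear_combination -h

lemma Q_mem_Sset {i : Fin 2} {x y : ZMod m × ZMod 8} (hy : y ∈ Sset m i x) :
    Q m i y ∈ Sset m i x := by
  obtain ⟨c, rfl⟩ := hy
  refine ⟨mmF i c, Prod.ext ?_ rfl⟩
  have h := castED (m := m) i (mmF i c)
  rw [hnm] at h
  simp only [Q]
  linear_combination h

lemma Sset_closed {i : Fin 2} {x y z : ZMod m × ZMod 8} (hy : y ∈ Sset m i x)
    (h : (F m i).Adj y z) : z ∈ Sset m i x := by
  rw [adj_iff] at h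
  rcases h with rfl | rfl
  · exact P_mem_Sset hy
  · exact Q_mem_Sset hy

lemma walk_to_mem {i : Fin 2} {x y u : ZMod m × ZMod 8} (w : (F m i).Walk y u)
    (hy : y ∈ Sset m i x) : u ∈ Sset m i x := by
  induction w with
  | nil => exact hy
  | cons h p ih => exact ih (Sset_closed hy h)

lemma Sset_snd_inj {i : Fin 2} {x y z : ZMod m × ZMod 8} (hy : y ∈ Sset m i x)
    (hz : z ∈ Sset m i x) (h : y.2 = z.2) : y = z := by
  obtain ⟨c, rfl⟩ := hy
  obtain ⟨c', rfl⟩ := hz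
  simp only at h
  rw [h]

lemma reach_P (i : Fin 2) (v : ZMod m × ZMod 8) : (F m i).Reachable v (P m i v) :=
  ((adj_iff i v _).2 (Or.inl rfl)).reachable

lemma horb : ∀ (i : Fin 2) (b c : ZMod 8),
    c = b ∨ c = nnF i b ∨ c = nnF i (nnF i b) ∨ c = nnF i (nnF i (nnF i b)) ∨
    c = nnF i (nnF i (nnF i (nnF i b))) ∨ c = nnF i (nnF i (nnF i (nnF i (nnF i b)))) ∨
    c = nnF i (nnF i (nnF i (nnF i (nnF i (nnF i b))))) ∨
    c = nnF i (nnF i (nnF i (nnF i (nnF i (nnF i (nnF i b)))))) := by decide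

lemma reach_all {i : Fin 2} {x y : ZMod m × ZMod 8} (hy : y ∈ Sset m i x) :
    (F m i).Reachable x y := by
  set x1 := P m i x with hx1
  set x2 := P m i x1 with hx2
  set x3 := P m i x2 with hx3
  set x4 := P m i x3 with hx4
  set x5 := P m i x4 with hx5
  set x6 := P m i x5 with hx6
  set x7 := P m i x6 with hx7
  have m0 := mem_Sset_self i x
  have m1 : x1 ∈ Sset m i x := P_mem_Sset m0
  have m2 : x2 ∈ Sset m i x := P_mem_Sset m1
  have m3 : x3 ∈ Sset m i x := P_mem_Sset m2
  have m4 : x4 ∈ Sset m i x := P_mem_Sset m3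
  have m5 : x5 ∈ Sset m i x := P_mem_Sset m4
  have m6 : x6 ∈ Sset m i x := P_mem_Sset m5
  have m7 : x7 ∈ Sset m i x := P_mem_Sset m6
  have r1 : (F m i).Reachable x x1 := reach_P i x
  have r2 : (F m i).Reachable x x2 := r1.trans (reach_P i x1)
  have r3 : (F m i).Reachable x x3 := r2.trans (reach_P i x2)
  have r4 : (F m i).Reachable x x4 := r3.trans (reach_P i x3)
  have r5 : (F m i).Reachable x x5 := r4.trans (reach_P i x4)
  have r6 : (F m i).Reachable x x6 := r5.trans (reach_P i x5)
  have r7 : (F m i).Reachable x x7 := r6.trans (reach_P i x6)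
  rcases horb i x.2 y.2 with h | h | h | h | h | h | h | h
  · rw [Sset_snd_inj hy m0 h]
  · rw [Sset_snd_inj hy m1 h]; exact r1
  · rw [Sset_snd_inj hy m2 h]; exact r2
  · rw [Sset_snd_inj hy m3 h]; exact r3
  · rw [Sset_snd_inj hy m4 h]; exact r4
  · rw [Sset_snd_inj hy m5 h]; exact r5
  · rw [Sset_snd_inj hy m6 h]; exact r6
  · rw [Sset_snd_inj hy m7 h]; exact r7

lemma supp_eq (i : Fin 2) (x : ZMod m × ZMod 8) :
    ((F m i).connectedComponentMk x).supp = Sset m i x := by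
  ext u
  rw [ConnectedComponent.mem_supp_iff, ConnectedComponent.eq]
  constructor
  · intro h
    obtain ⟨w⟩ := h.symm
    exact walk_to_mem w (mem_Sset_self i x)
  · intro hu
    exact (reach_all hu).symm

lemma Sset_ncard (i : Fin 2) (x : ZMod m × ZMod 8) : (Sset m i x).ncard = 8 := by
  have hinj : Function.Injective
      (fun c : ZMod 8 => ((x.1 - E' m i x.2 + E' m i c, c) : ZMod m × ZMod 8)) :=
    fun a b h => congrArg Prod.snd h
  rw [Sset, ← Set.image_univ, Set.ncard_image_of_injective _ hinj, Set.ncard_univ]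
  simp [Nat.card_eq_fintype_card, ZMod.card]

lemma isCycleFactor (i : Fin 2) : IsCycleFactor (F m i) 8 := by
  refine ⟨deg2 i, fun v => ?_⟩
  rw [supp_eq, Sset_ncard]

def tval : Fin 3 → ℤ := fun s => if s = 0 then -1 else if s = 1 then 0 else 1

lemma hmaster : ∀ (b c : ZMod 8) (s : Fin 3),
    ((s = 2 ∧ c = b + 6) ∨ (s = 0 ∧ c = b + 2) ∨ (s = 1 ∧ (pairs27 b c ∨ pairs27 c b))) →
    (((c = nnF 0 b ∧ tval s = DzF 0 b) ∨ (c = mmF 0 b ∧ tval s = -DzF 0 c)) ∧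
      (c ≠ nnF 1 b ∧ c ≠ mmF 1 b)) ∨
    (((c = nnF 1 b ∧ tval s = DzF 1 b) ∨ (c = mmF 1 b ∧ tval s = -DzF 1 c)) ∧
      (c ≠ nnF 0 b ∧ c ≠ mmF 0 b)) := by decide

lemma h8z : (8 : ZMod 8) = 0 := by decide

lemma adj_of_match {i : Fin 2} {a a' : ZMod m} {b c : ZMod 8} {s : Fin 3}
    (hfst : a' = a + ((tval s : ℤ) : ZMod m))
    (hpos : (c = nnF i b ∧ tval s = DzF i b) ∨ (c = mmF i b ∧ tval s = -DzF i c)) :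
    (F m i).Adj (a, b) (a', c) := by
  rw [adj_iff]
  rcases hpos with ⟨h2, h3⟩ | ⟨h2, h3⟩
  · left
    refine Prod.ext ?_ h2
    show a' = a + ((DzF i b : ℤ) : ZMod m)
    rw [hfst, h3]
  · right
    refine Prod.ext ?_ h2
    show a' = a - ((DzF i (mmF i b) : ℤ) : ZMod m)
    rw [hfst, h3, ← h2]
    push_cast
    ring

lemma not_adj_of_neg {i : Fin 2} {a a' : ZMod m} {b c : ZMod 8}
    (hneg : c ≠ nnF i b ∧ c ≠ mmF i b) : ¬ (F m i).Adj (a, b) (a', c) := by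
  rw [adj_iff]
  rintro (h4 | h4)
  · exact hneg.1 (congrArg Prod.snd h4)
  · exact hneg.2 (congrArg Prod.snd h4)

lemma adj_cases {x y : ZMod m × ZMod 8} (h : (G' m).Adj x y) :
    ((F m 0).Adj x y ∧ ¬ (F m 1).Adj x y) ∨ ((F m 1).Adj x y ∧ ¬ (F m 0).Adj x y) := by
  obtain ⟨hne, hrel⟩ := h
  obtain ⟨a, b⟩ := x
  obtain ⟨a', c⟩ := y
  have key : ∃ s : Fin 3, a' = a + ((tval s : ℤ) : ZMod m) ∧
      ((s = 2 ∧ c = b + 6) ∨ (s = 0 ∧ c = b + 2) ∨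
        (s = 1 ∧ (pairs27 b c ∨ pairs27 c b))) := by
    rcases hrel with (h1 | h1) | (h1 | h1)
    · rw [Prod.mk_sub_mk, Prod.mk.injEq] at h1
      refine ⟨0, ?_, Or.inr (Or.inl ⟨rfl, ?_⟩)⟩
      · have ht : (tval 0 : ℤ) = -1 := rfl
        rw [ht]
        push_cast
        linear_combination -h1.1
      · linear_combination -h1.2 - h8z
    · refine ⟨1, ?_, Or.inr (Or.inr ⟨rfl, Or.inl ((I27_iff b c).1 h1.2)⟩)⟩
      have ht : (tval 1 : ℤ) = 0 := rfl
      rw [ht]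
      push_cast
      linear_combination -h1.1
    · rw [Prod.mk_sub_mk, Prod.mk.injEq] at h1
      refine ⟨2, ?_, Or.inl ⟨rfl, ?_⟩⟩
      · have ht : (tval 2 : ℤ) = 1 := rfl
        rw [ht]
        push_cast
        linear_combination h1.1
      · linear_combination h1.2
    · refine ⟨1, ?_, Or.inr (Or.inr ⟨rfl, Or.inr ((I27_iff c b).1 h1.2)⟩)⟩
      have ht : (tval 1 : ℤ) = 0 := rfl
      rw [ht]
      push_cast
      linear_combination h1.1
  obtain ⟨s, hfst, hrel8⟩ := key
  rcases hmaster b c s hrel8 with ⟨hpos, hneg⟩ | ⟨hpos, hneg⟩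
  · exact Or.inl ⟨adj_of_match hfst hpos, not_adj_of_neg hneg⟩
  · exact Or.inr ⟨adj_of_match hfst hpos, not_adj_of_neg hneg⟩

lemma main (m : ℕ) (hm : 3 ≤ m) : CycleDecomp (G' m) (fun _ : Fin 2 => 8) := by
  refine ⟨F m, fun i => ⟨le_G i, isCycleFactor i⟩, ?_⟩
  intro e he
  induction e with
  | h x y =>
    rw [mem_edgeSet] at he
    rcases adj_cases he with ⟨h0, h1⟩ | ⟨h1, h0⟩
    · refine ⟨0, (F m 0).mem_edgeSet.2 h0, fun j hj => ?_⟩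
      fin_cases j
      · rfl
      · exact absurd ((F m 1).mem_edgeSet.1 hj) h1
    · refine ⟨1, (F m 1).mem_edgeSet.2 h1, fun j hj => ?_⟩
      fin_cases j
      · exact absurd ((F m 0).mem_edgeSet.1 hj) h0
      · rfl

end S8

theorem stmt_8 (m : ℕ) (hm : 3 ≤ m) :
    CycleDecomp
      (SimpleGraph.fromRel (fun x y : ZMod m × ZMod 8 =>
        x - y = ((1 : ZMod m), (6 : ZMod 8)) ∨ (x.1 = y.1 ∧ (x.2, y.2) ∈ I27)))
      (fun _ : Fin 2 => 8) :=
  S8.main m hm
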